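/- arXiv:1511.05893 — 6 statements merged into one kernel-verified Lean document; each statement's English description precedes it below -/
import Mathlib

section
/- Let T be a generalized Collatz mapping of relatively prime type (gcd(m_ω, d) = 1 for all ω) and let Φ be a strictly positive linear form for the set of shift vectors S_r (Φ(r_ω) > 0 for every nonzero r_ω). If x ∈ Λ is nonzero with Φ(x) = 0, then the T-trajectory of x is not cyclic; in fact Φ(T^i(x)) > 0 for all sufficiently large i. -/
def toE {e : ℕ} (x : Fin e → ℤ) : Fin e → ℝ := fun i => (x i : ℝ)

def res {e : ℕ} (d : ℕ) (x : Fin e → ℤ) : Fin e → ZMod d := fun i => (x i : ZMod d)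

/-!
Writing `T` in the form `d • T y = m • y + r`, a linear form `Φ` satisfies
`d · Φ(T y) = m · Φ(y) + Φ(r)`. Since `m, d > 0` and `Φ(r) ≥ 0`, the sign of `Φ` can only
improve along a trajectory, and once it is positive it stays positive. Starting from
`Φ(x) = 0`, if `Φ` vanished along the whole trajectory, no shift could ever be picked up;
by relative primality only the zero residue class has zero shift, so every iterate would be
divisible by `d` and `d^i • T^i x = m^i • x`. Coprimality then gives `d^i ∣ x` for all `i`,
forcing `x = 0`. A cycle through `x` would bring `Φ` back to `0`, so there is none.
-/

section Collatz

variable {e d : ℕ} {m : (Fin e → ZMod d) → ℤ} {r : (Fin e → ZMod d) → (Fin e → ℤ)}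
  {T : (Fin e → ℤ) → (Fin e → ℤ)} {Φ : (Fin e → ℝ) →ₗ[ℝ] ℝ}

def IsGeneralizedCollatzMap (d : ℕ) (m : (Fin e → ZMod d) → ℤ)
    (r : (Fin e → ZMod d) → (Fin e → ℤ)) (T : (Fin e → ℤ) → (Fin e → ℤ)) : Prop :=
  ∀ x, (d : ℤ) • T x = m (res d x) • x + r (res d x)

def IsStrictlyPositiveOnShifts (Φ : (Fin e → ℝ) →ₗ[ℝ] ℝ)
    (r : (Fin e → ZMod d) → (Fin e → ℤ)) : Prop :=
  ∀ ω, r ω ≠ 0 → 0 < Φ (toE (r ω))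

@[simp]
lemma toE_zero : toE (0 : Fin e → ℤ) = 0 := by
  funext i; simp [toE]

lemma toE_add (x y : Fin e → ℤ) : toE (x + y) = toE x + toE y := by
  funext i; simp [toE]

lemma toE_zsmul (k : ℤ) (x : Fin e → ℤ) : toE (k • x) = (k : ℝ) • toE x := by
  funext i; simp [toE]

lemma IsGeneralizedCollatzMap.form_apply (hT : IsGeneralizedCollatzMap d m r T)
    (Φ : (Fin e → ℝ) →ₗ[ℝ] ℝ) (y : Fin e → ℤ) :
    (d : ℝ) * Φ (toE (T y)) = m (res d y) * Φ (toE y) + Φ (toE (r (res d y))) := by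
  have h := congrArg (fun z => Φ (toE z)) (hT y)
  simpa only [toE_add, toE_zsmul, map_add, map_smul, smul_eq_mul, Int.cast_natCast] using h

lemma IsStrictlyPositiveOnShifts.nonneg (hΦ : IsStrictlyPositiveOnShifts Φ r)
    (ω : Fin e → ZMod d) : 0 ≤ Φ (toE (r ω)) := by
  by_cases h : r ω = 0
  · simp [h]
  · exact (hΦ ω h).le

lemma form_apply_nonneg (hd : 0 < d) (hm : ∀ ω, 0 < m ω) (hT : IsGeneralizedCollatzMap d m r T)
    (hΦ : IsStrictlyPositiveOnShifts Φ r) {y : Fin e → ℤ} (hy : 0 ≤ Φ (toE y)) :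
    0 ≤ Φ (toE (T y)) := by
  have hm' : (0 : ℝ) < m (res d y) := by exact_mod_cast hm _
  refine nonneg_of_mul_nonneg_right ?_ (Nat.cast_pos.2 hd : (0 : ℝ) < d)
  rw [hT.form_apply]
  have := hΦ.nonneg (res d y)
  positivity

lemma form_apply_pos (hm : ∀ ω, 0 < m ω) (hT : IsGeneralizedCollatzMap d m r T)
    (hΦ : IsStrictlyPositiveOnShifts Φ r) {y : Fin e → ℤ} (hy : 0 < Φ (toE y)) :
    0 < Φ (toE (T y)) := by
  have hm' : (0 : ℝ) < m (res d y) := by exact_mod_cast hm _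
  refine pos_of_mul_pos_right ?_ (Nat.cast_nonneg d : (0 : ℝ) ≤ d)
  rw [hT.form_apply]
  have := hΦ.nonneg (res d y)
  positivity

lemma shift_eq_zero_of_form_eq_zero (hT : IsGeneralizedCollatzMap d m r T)
    (hΦ : IsStrictlyPositiveOnShifts Φ r) {y : Fin e → ℤ} (hy : Φ (toE y) = 0)
    (hTy : Φ (toE (T y)) = 0) : r (res d y) = 0 := by
  by_contra hr
  have h := hT.form_apply Φ y
  rw [hy, hTy] at h
  linarith [hΦ _ hr]

/-- Relative primality: `r ω = 0` forces `d ∣ m ω • y` for any `y` in the class `ω`. -/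
lemma IsGeneralizedCollatzMap.eq_zero_of_shift_eq_zero (hcop : ∀ ω, IsCoprime (m ω) (d : ℤ))
    (hT : IsGeneralizedCollatzMap d m r T) {ω : Fin e → ZMod d} (hω : r ω = 0) : ω = 0 := by
  set y : Fin e → ℤ := fun j => (ω j).cast
  have hres : res d y = ω := funext fun j => ZMod.intCast_zmod_cast (ω j)
  have hTy := hT y
  rw [hres, hω, add_zero] at hTy
  funext j
  have hdvd : (d : ℤ) ∣ m ω * y j := ⟨T y j, by simpa using (congrFun hTy j).symm⟩
  rw [← hres]
  exact (ZMod.intCast_zmod_eq_zero_iff_dvd _ _).2 ((hcop ω).symm.dvd_of_dvd_mul_left hdvd)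

lemma IsGeneralizedCollatzMap.pow_smul_iterate (hT : IsGeneralizedCollatzMap d m r T)
    (hr : r 0 = 0) {x : Fin e → ℤ} (h0 : ∀ i, res d (T^[i] x) = 0) (i : ℕ) :
    (d : ℤ) ^ i • T^[i] x = m 0 ^ i • x := by
  induction i with
  | zero => simp
  | succ n ih =>
    have hstep := hT (T^[n] x)
    rw [h0 n, hr, add_zero] at hstep
    calc (d : ℤ) ^ (n + 1) • T^[n + 1] x = (d : ℤ) ^ n • ((d : ℤ) • T (T^[n] x)) := by
          rw [pow_succ, mul_smul, Function.iterate_succ_apply']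
      _ = m 0 • ((d : ℤ) ^ n • T^[n] x) := by rw [hstep, smul_comm]
      _ = m 0 ^ (n + 1) • x := by rw [ih, smul_smul, ← pow_succ']

lemma Int.eq_zero_of_forall_pow_dvd {a b : ℤ} (ha : a.natAbs ≠ 1) (h : ∀ i : ℕ, a ^ i ∣ b) :
    b = 0 := by
  by_contra hb
  obtain ⟨k, hk⟩ := Int.finiteMultiplicity_iff.2 ⟨ha, hb⟩
  exact hk (h _)

lemma IsGeneralizedCollatzMap.eq_zero_of_forall_shift_iterate_eq_zero (hd : 1 < d)
    (hcop : ∀ ω, IsCoprime (m ω) (d : ℤ)) (hT : IsGeneralizedCollatzMap d m r T)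
    {x : Fin e → ℤ} (hr : ∀ i, r (res d (T^[i] x)) = 0) : x = 0 := by
  have h0 : ∀ i, res d (T^[i] x) = 0 := fun i => hT.eq_zero_of_shift_eq_zero hcop (hr i)
  have hr0 : r 0 = 0 := by rw [← h0 0]; exact hr 0
  funext j
  refine Int.eq_zero_of_forall_pow_dvd (a := d) (by omega) fun i => ?_
  have hdvd : (d : ℤ) ^ i ∣ m 0 ^ i * x j :=
    ⟨T^[i] x j, by simpa using (congrFun (hT.pow_smul_iterate hr0 h0 i) j).symm⟩
  exact (hcop 0).pow.symm.dvd_of_dvd_mul_left hdvd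

lemma exists_form_iterate_pos (hd : 1 < d) (hm : ∀ ω, 0 < m ω)
    (hcop : ∀ ω, IsCoprime (m ω) (d : ℤ)) (hT : IsGeneralizedCollatzMap d m r T)
    (hΦ : IsStrictlyPositiveOnShifts Φ r) {x : Fin e → ℤ} (hx : x ≠ 0)
    (hx0 : 0 ≤ Φ (toE x)) : ∃ k, 0 < Φ (toE (T^[k] x)) := by
  by_contra! h
  have hnonneg : ∀ i, 0 ≤ Φ (toE (T^[i] x)) :=
    Function.Iterate.rec _ hx0 (fun _ => form_apply_nonneg (by omega) hm hT hΦ)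
  have hzero : ∀ i, Φ (toE (T^[i] x)) = 0 := fun i => (h i).antisymm (hnonneg i)
  refine hx (hT.eq_zero_of_forall_shift_iterate_eq_zero hd hcop fun i => ?_)
  refine shift_eq_zero_of_form_eq_zero hT hΦ (hzero i) ?_
  rw [← Function.iterate_succ_apply' T i x]
  exact hzero (i + 1)

lemma form_iterate_pos_of_le (hm : ∀ ω, 0 < m ω)
    (hT : IsGeneralizedCollatzMap d m r T) (hΦ : IsStrictlyPositiveOnShifts Φ r)
    {x : Fin e → ℤ} {k i : ℕ} (hk : 0 < Φ (toE (T^[k] x))) (hki : k ≤ i) :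
    0 < Φ (toE (T^[i] x)) := by
  obtain ⟨j, rfl⟩ := Nat.exists_eq_add_of_le hki
  rw [add_comm, Function.iterate_add_apply]
  exact Function.Iterate.rec _ hk (fun _ => form_apply_pos hm hT hΦ) j

end Collatz

/-- for a generalized Collatz mapping of relatively prime type and a
strictly positive form `Φ` for the shift vectors, every nonzero lattice point `x`
with `Φ(x) = 0` has `Φ(T^i(x)) > 0` for all large `i`; in particular the
trajectory of `x` is not cyclic. -/
theorem directed_point_not_cyclic
    {e : ℕ} (d : ℕ) (hd : 1 < d)
    (m : (Fin e → ZMod d) → ℤ) (r : (Fin e → ZMod d) → (Fin e → ℤ))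
    (hm : ∀ ω, 0 < m ω)
    (hcop : ∀ ω, IsCoprime (m ω) (d : ℤ))
    (T : (Fin e → ℤ) → (Fin e → ℤ))
    (hT : ∀ x : Fin e → ℤ, (d : ℤ) • T x = m (res d x) • x + r (res d x))
    (Φ : (Fin e → ℝ) →ₗ[ℝ] ℝ)
    (hΦ : ∀ ω, r ω ≠ 0 → 0 < Φ (toE (r ω)))
    (x : Fin e → ℤ) (hx : x ≠ 0) (hx0 : Φ (toE x) = 0) :
    (∃ N : ℕ, ∀ i : ℕ, N ≤ i → 0 < Φ (toE (T^[i] x))) ∧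
    (∀ p : ℕ, 0 < p → T^[p] x ≠ x) := by
  obtain ⟨k, hk⟩ := exists_form_iterate_pos hd hm hcop hT hΦ hx hx0.ge
  have hpos : ∀ i, k ≤ i → 0 < Φ (toE (T^[i] x)) :=
    fun i => form_iterate_pos_of_le hm hT hΦ hk
  refine ⟨⟨k, hpos⟩, fun p hp hcyc => ?_⟩
  have h := hpos (p * k) (Nat.le_mul_of_pos_left k hp)
  rw [Function.iterate_mul, Function.iterate_fixed hcyc, hx0] at h
  exact h.false
end

section
/- Let T be a generalized Collatz mapping on a lattice Λ ⊆ E whose shift vectors S_r span E over ℝ. If a hyperplane H ⊆ E is separating for T (i.e., H = ker Φ for some linear form Φ with |m_ω Φ(x)| > |Φ(r_ω)| for all ω and all x ∈ ω with Φ(x) ≠ 0), then H is defined over ℚ, i.e., H is spanned by vectors in Λ ⊗ ℚ. -/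
theorem AddSubgroup.exists_add_mul_mem_Ioo_of_dense {S : AddSubgroup ℝ} (hS : Dense (S : Set ℝ))
    {t : ℝ} (ht : 0 < t) (c : ℝ) {a b : ℝ} (hab : a < b) : ∃ s ∈ S, c + t * s ∈ Set.Ioo a b := by
  have hI : (Set.Ioo ((a - c) / t) ((b - c) / t)).Nonempty :=
    Set.nonempty_Ioo.mpr (div_lt_div_of_pos_right (by linarith) ht)
  obtain ⟨s, hsS, hs₁, hs₂⟩ := hS.exists_mem_open isOpen_Ioo hI
  refine ⟨s, hsS, ?_, ?_⟩
  · linarith [(div_lt_iff₀' ht).mp hs₁]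
  · linarith [(lt_div_iff₀' ht).mp hs₂]

section

variable {e : ℕ}

theorem res_surjective (d : ℕ) : Function.Surjective (res (e := e) d) :=
  Function.Surjective.piMap fun _ => ZMod.intCast_surjective

theorem res_add_nsmul (d : ℕ) (x y : Fin e → ℤ) : res d (x + d • y) = res d x := by
  funext i
  simp [res]

def latticeForm (Φ : (Fin e → ℝ) →ₗ[ℝ] ℝ) : (Fin e → ℤ) →+ ℝ :=
  Φ.toAddMonoidHom.comp ((Int.castAddHom ℝ).compLeft (Fin e))

theorem latticeForm_apply (Φ : (Fin e → ℝ) →ₗ[ℝ] ℝ) (x : Fin e → ℤ) :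
    latticeForm Φ x = Φ (toE x) :=
  rfl

theorem exists_res_eq_latticeForm_mem_Ioo {d : ℕ} (hd : d ≠ 0)
    {Φ : (Fin e → ℝ) →ₗ[ℝ] ℝ} (hdense : Dense ((latticeForm Φ).range : Set ℝ))
    (x₀ : Fin e → ℤ) {a b : ℝ} (hab : a < b) :
    ∃ x, res d x = res d x₀ ∧ latticeForm Φ x ∈ Set.Ioo a b := by
  obtain ⟨_, ⟨y, rfl⟩, hy⟩ := AddSubgroup.exists_add_mul_mem_Ioo_of_dense hdense
    (Nat.cast_pos.mpr (Nat.pos_of_ne_zero hd)) (latticeForm Φ x₀) hab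
  refine ⟨x₀ + d • y, res_add_nsmul d x₀ y, ?_⟩
  rwa [map_add, map_nsmul, nsmul_eq_mul]

def IsSeparating (d : ℕ) (m : (Fin e → ZMod d) → ℤ) (r : (Fin e → ZMod d) → (Fin e → ℤ))
    (Φ : (Fin e → ℝ) →ₗ[ℝ] ℝ) : Prop :=
  ∀ x : Fin e → ℤ, Φ (toE x) ≠ 0 →
    |Φ (toE (r (res d x)))| < |(m (res d x) : ℝ) * Φ (toE x)|

theorem IsSeparating.map_shift_eq_zero_of_dense {d : ℕ} (hd : d ≠ 0)
    {m : (Fin e → ZMod d) → ℤ} {r : (Fin e → ZMod d) → (Fin e → ℤ)}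
    {Φ : (Fin e → ℝ) →ₗ[ℝ] ℝ} (hsep : IsSeparating d m r Φ)
    (hdense : Dense ((latticeForm Φ).range : Set ℝ)) (ω : Fin e → ZMod d) :
    Φ (toE (r ω)) = 0 := by
  obtain ⟨x₀, rfl⟩ := res_surjective d ω
  set δ := |Φ (toE (r (res d x₀)))|
  set μ := |(m (res d x₀) : ℝ)|
  by_contra hne
  have hδ : 0 < δ := abs_pos.mpr hne
  obtain ⟨x, hx, hpos, hsmall⟩ :=
    exists_res_eq_latticeForm_mem_Ioo hd hdense x₀ (div_pos hδ (by positivity : 0 < μ + 1))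
  rw [latticeForm_apply] at hpos hsmall
  have hlt := hsep x hpos.ne'
  rw [hx, abs_mul, abs_of_pos hpos] at hlt
  rw [lt_div_iff₀ (by positivity)] at hsmall
  -- `δ < μ Φ(x) ≤ (μ + 1) Φ(x) < δ`
  nlinarith

end

theorem separating_hyperplane_rational_general
    {e : ℕ} (d : ℕ) (hd : 1 < d)
    (m : (Fin e → ZMod d) → ℤ) (r : (Fin e → ZMod d) → (Fin e → ℤ))
    (hspan : Submodule.span ℝ (Set.range fun ω => toE (r ω)) = ⊤)
    (Φ : (Fin e → ℝ) →ₗ[ℝ] ℝ) (hΦ : Φ ≠ 0)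
    (hsep : ∀ x : Fin e → ℤ, Φ (toE x) ≠ 0 →
      |Φ (toE (r (res d x)))| < |(m (res d x) : ℝ) * Φ (toE x)|) :
    ∃ Ψ : (Fin e → ℝ) →ₗ[ℝ] ℝ, Ψ ≠ 0 ∧
      (∀ x : Fin e → ℤ, ∃ q : ℚ, Ψ (toE x) = (q : ℝ)) ∧
      LinearMap.ker Ψ = LinearMap.ker Φ := by
  have hshifts : ¬ ∀ ω, Φ (toE (r ω)) = 0 := fun h =>
    hΦ (LinearMap.ext_on_range hspan h)
  rcases (latticeForm Φ).range.dense_or_cyclic with hdense | ⟨a, ha⟩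
  · exact (hshifts (IsSeparating.map_shift_eq_zero_of_dense (by omega) hsep hdense)).elim
  have hmult (x : Fin e → ℤ) : ∃ n : ℤ, n • a = Φ (toE x) := by
    rw [← latticeForm_apply, ← AddSubgroup.mem_closure_singleton, ← ha]
    exact ⟨x, rfl⟩
  have ha₀ : a ≠ 0 := by
    rintro rfl
    refine hshifts fun ω => ?_
    obtain ⟨n, hn⟩ := hmult (r ω)
    simpa using hn.symm
  refine ⟨a⁻¹ • Φ, smul_ne_zero (inv_ne_zero ha₀) hΦ, fun x => ?_, Φ.ker_smul _ (inv_ne_zero ha₀)⟩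
  obtain ⟨n, hn⟩ := hmult x
  refine ⟨n, ?_⟩
  rw [LinearMap.smul_apply, ← hn, zsmul_eq_mul, smul_eq_mul]
  push_cast
  field_simp

/-- if the shift vectors of a generalized Collatz mapping span
`E = ℝ^e` and `Φ` is a separating linear form (`|m_ω Φ(x)| > |Φ(r_ω)|` for all
`x ∈ ω` with `Φ(x) ≠ 0`), then the hyperplane `ker Φ` is defined over ℚ: it is
the kernel of a linear form taking rational values on the lattice. -/
theorem separating_hyperplane_rational
    {e : ℕ} (d : ℕ) (hd : 1 < d)
    (m : (Fin e → ZMod d) → ℤ) (r : (Fin e → ZMod d) → (Fin e → ℤ))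
    (hm : ∀ ω, 0 < m ω)
    (T : (Fin e → ℤ) → (Fin e → ℤ))
    (hT : ∀ x : Fin e → ℤ, (d : ℤ) • T x = m (res d x) • x + r (res d x))
    (hspan : Submodule.span ℝ (Set.range fun ω => toE (r ω)) = ⊤)
    (Φ : (Fin e → ℝ) →ₗ[ℝ] ℝ) (hΦ : Φ ≠ 0)
    (hsep : ∀ x : Fin e → ℤ, Φ (toE x) ≠ 0 →
      |Φ (toE (r (res d x)))| < |(m (res d x) : ℝ) * Φ (toE x)|) :
    ∃ Ψ : (Fin e → ℝ) →ₗ[ℝ] ℝ, Ψ ≠ 0 ∧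
      (∀ x : Fin e → ℤ, ∃ q : ℚ, Ψ (toE x) = (q : ℝ)) ∧
      LinearMap.ker Ψ = LinearMap.ker Φ :=
  separating_hyperplane_rational_general d hd m r hspan Φ hΦ hsep
end

section
/- For the map T : ℤ² → ℤ² from the extension of the Collatz map to ℤ[√2] (T(x,y) = ½(x,y), ½(3x+1,3y), ½(3x,3y+1), ½(9x+3,9y+1) according to parities), every point (x,y) ∈ ℤ² with x > 0 and y < 0 has a divergent T-trajectory, i.e., the sequence (T^k(x,y)) is not eventually periodic. -/
/-!
On the open fourth quadrant every step of `T` has the form `2 • T v = c • v + s` with `c` odd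
and a shift `s ≥ 0`, and the quadrant is `T`-invariant. Composing `p` steps gives
`2 ^ p • T^[p] v = C • v + S` with `C` odd and `S ≥ 0`. A `p`-periodic point `v = (x, y)` would
then satisfy `(2 ^ p - C) • v = S ≥ 0`, so `2 ^ p ≥ C` because `x > 0` and `2 ^ p ≤ C` because
`y < 0`; but `2 ^ p ≠ C` by parity.
-/

open Function Set

def fourthQuadrant : Set (ℤ × ℤ) := {v | 0 < v.1 ∧ v.2 < 0}

def IsOddAffineImage {M : Type*} [AddCommGroup M] [PartialOrder M] (n : ℕ) (w v : M) : Prop :=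
  ∃ c : ℤ, ∃ s : M, Odd c ∧ 0 < c ∧ 0 ≤ s ∧ (2 : ℤ) ^ n • w = c • v + s

namespace IsOddAffineImage

variable {M : Type*} [AddCommGroup M] [PartialOrder M]

theorem refl (v : M) : IsOddAffineImage 0 v v :=
  ⟨1, 0, odd_one, one_pos, le_rfl, by simp⟩

variable [IsOrderedAddMonoid M]

theorem trans {m n : ℕ} {u v w : M} (hwv : IsOddAffineImage m w v)
    (huw : IsOddAffineImage n u w) : IsOddAffineImage (m + n) u v := by
  obtain ⟨c, s, hc, hc0, hs, hw⟩ := hwv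
  obtain ⟨c', s', hc', hc'0, hs', hu⟩ := huw
  refine ⟨c' * c, c' • s + (2 : ℤ) ^ m • s', hc'.mul hc, by positivity,
    add_nonneg (zsmul_nonneg hs hc'0.le) (zsmul_nonneg hs' (by positivity)), ?_⟩
  calc (2 : ℤ) ^ (m + n) • u = (2 : ℤ) ^ m • ((2 : ℤ) ^ n • u) := by rw [pow_add, mul_smul]
    _ = c' • ((2 : ℤ) ^ m • w) + (2 : ℤ) ^ m • s' := by
      rw [hu, smul_add, smul_comm]
    _ = (c' * c) • v + (c' • s + (2 : ℤ) ^ m • s') := by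
      rw [hw, smul_add, mul_smul, add_assoc]

theorem iterate {f : M → M} {Q : Set M} (hQ : MapsTo f Q Q)
    (hf : ∀ v ∈ Q, IsOddAffineImage 1 (f v) v) {v : M} (hv : v ∈ Q) (k : ℕ) :
    IsOddAffineImage k (f^[k] v) v := by
  induction k with
  | zero => exact refl v
  | succ k ih =>
    rw [iterate_succ_apply']
    exact ih.trans (hf _ (hQ.iterate k hv))

end IsOddAffineImage

theorem not_isOddAffineImage_self {n : ℕ} (hn : 0 < n) {v : ℤ × ℤ} (hv : v ∈ fourthQuadrant) :
    ¬ IsOddAffineImage n v v := by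
  rintro ⟨c, s, hc, -, hs, h⟩
  have h₁ : (2 ^ n - c) * v.1 = s.1 := by
    have : 2 ^ n * v.1 = c * v.1 + s.1 := congrArg Prod.fst h
    linarith
  have h₂ : (2 ^ n - c) * v.2 = s.2 := by
    have : 2 ^ n * v.2 = c * v.2 + s.2 := congrArg Prod.snd h
    linarith
  have hs₁ : 0 ≤ s.1 := hs.1
  have hs₂ : 0 ≤ s.2 := hs.2
  have hpow : (2 : ℤ) ^ n = c := by nlinarith [hv.1, hv.2]
  exact Int.not_even_iff_odd.mpr hc (hpow ▸ (even_two.pow_of_ne_zero hn.ne'))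

theorem mem_fourthQuadrant_of_two_smul_eq {v w s : ℤ × ℤ} {c : ℤ} (hv : v ∈ fourthQuadrant)
    (hc : 0 < c) (hs : 0 ≤ s) (hsc : s.2 < c) (h : (2 : ℤ) • w = c • v + s) :
    w ∈ fourthQuadrant := by
  have h₁ : 2 * w.1 = c * v.1 + s.1 := congrArg Prod.fst h
  have h₂ : 2 * w.2 = c * v.2 + s.2 := congrArg Prod.snd h
  have hs₁ : 0 ≤ s.1 := hs.1
  constructor
  · nlinarith [mul_pos hc hv.1]
  · nlinarith [hv.2]

theorem exists_two_smul_eq (T : ℤ × ℤ → ℤ × ℤ)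
    (hT1 : ∀ x y : ℤ, Even x → Even y → (2 : ℤ) • T (x, y) = (x, y))
    (hT2 : ∀ x y : ℤ, Odd x → Even y → (2 : ℤ) • T (x, y) = (3 * x + 1, 3 * y))
    (hT3 : ∀ x y : ℤ, Even x → Odd y → (2 : ℤ) • T (x, y) = (3 * x, 3 * y + 1))
    (hT4 : ∀ x y : ℤ, Odd x → Odd y → (2 : ℤ) • T (x, y) = (9 * x + 3, 9 * y + 1))
    (v : ℤ × ℤ) :
    ∃ c : ℤ, ∃ s : ℤ × ℤ, Odd c ∧ 0 < c ∧ 0 ≤ s ∧ s.2 < c ∧ (2 : ℤ) • T v = c • v + s := by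
  obtain ⟨x, y⟩ := v
  rcases Int.even_or_odd x with hx | hx <;> rcases Int.even_or_odd y with hy | hy
  · exact ⟨1, (0, 0), odd_one, by decide, le_rfl, by decide, by simp [hT1 x y hx hy]⟩
  · exact ⟨3, (0, 1), by decide, by decide, by decide, by decide, by simp [hT3 x y hx hy]⟩
  · exact ⟨3, (1, 0), by decide, by decide, by decide, by decide, by simp [hT2 x y hx hy]⟩
  · exact ⟨9, (3, 1), by decide, by decide, by decide, by decide, by simp [hT4 x y hx hy]⟩

/-- for the extension of the Collatz map to ℤ[√2] ≅ ℤ², every point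
of the open fourth quadrant (`x > 0`, `y < 0`) has a divergent trajectory: the
sequence of iterates is not eventually periodic. -/
theorem fourth_quadrant_divergent
    (T : ℤ × ℤ → ℤ × ℤ)
    (hT1 : ∀ x y : ℤ, Even x → Even y → (2 : ℤ) • T (x, y) = (x, y))
    (hT2 : ∀ x y : ℤ, Odd x → Even y → (2 : ℤ) • T (x, y) = (3 * x + 1, 3 * y))
    (hT3 : ∀ x y : ℤ, Even x → Odd y → (2 : ℤ) • T (x, y) = (3 * x, 3 * y + 1))
    (hT4 : ∀ x y : ℤ, Odd x → Odd y → (2 : ℤ) • T (x, y) = (9 * x + 3, 9 * y + 1)) :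
    ∀ x y : ℤ, 0 < x → y < 0 →
      ¬ ∃ N p : ℕ, 0 < p ∧ T^[N + p] (x, y) = T^[N] (x, y) := by
  intro x y hx hy ⟨N, p, hp, hper⟩
  have hQ : MapsTo T fourthQuadrant fourthQuadrant := fun v hv => by
    obtain ⟨c, s, -, hc, hs, hsc, h⟩ := exists_two_smul_eq T hT1 hT2 hT3 hT4 v
    exact mem_fourthQuadrant_of_two_smul_eq hv hc hs hsc h
  have hstep : ∀ v ∈ fourthQuadrant, IsOddAffineImage 1 (T v) v := fun v _ => by
    obtain ⟨c, s, hc, hc0, hs, -, h⟩ := exists_two_smul_eq T hT1 hT2 hT3 hT4 v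
    exact ⟨c, s, hc, hc0, hs, by rwa [pow_one]⟩
  have hv : T^[N] (x, y) ∈ fourthQuadrant := hQ.iterate N ⟨hx, hy⟩
  have hcycle := IsOddAffineImage.iterate hQ hstep hv p
  rw [← iterate_add_apply, add_comm, hper] at hcycle
  exact not_isOddAffineImage_self hp hv hcycle
end

section
/- Let T be a generalized Collatz mapping of relatively prime type on Λ. For x, y ∈ Λ and k ≥ 1, one has x ≡ y mod d^kΛ if and only if T^i(x) ≡ T^i(y) mod dΛ for all i = 0,…,k−1. -/
lemma res_eq_res_iff_dvd {e : ℕ} (n : ℕ) (x y : Fin e → ℤ) :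
    res n x = res n y ↔ ∀ i, (n : ℤ) ∣ y i - x i := by
  simp only [res, funext_iff, ZMod.intCast_eq_intCast_iff, Int.modEq_iff_dvd]

lemma res_one_eq {e : ℕ} (x y : Fin e → ℤ) : res 1 x = res 1 y :=
  Subsingleton.elim _ _

lemma res_eq_of_res_pow_succ_eq {e : ℕ} {d k : ℕ} {x y : Fin e → ℤ}
    (h : res (d ^ (k + 1)) x = res (d ^ (k + 1)) y) : res d x = res d y := by
  rw [res_eq_res_iff_dvd] at h ⊢
  exact fun i => (dvd_pow_self (d : ℤ) k.succ_ne_zero).trans (by exact_mod_cast h i)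

lemma pow_succ_dvd_iff_pow_dvd_of_mul_eq {R : Type*} [CommRing R] [IsDomain R]
    {d m a b : R} (hd : d ≠ 0) (hcop : IsCoprime m d) (h : d * b = m * a) (k : ℕ) :
    d ^ (k + 1) ∣ a ↔ d ^ k ∣ b := by
  constructor
  · rintro ⟨t, rfl⟩
    exact ⟨m * t, mul_left_cancel₀ hd (by rw [h]; ring)⟩
  · rintro ⟨t, rfl⟩
    exact hcop.symm.pow_left.dvd_of_dvd_mul_left ⟨t, by rw [← h]; ring⟩

section CollatzStep

variable {e d : ℕ} {m : (Fin e → ZMod d) → ℤ} {r : (Fin e → ZMod d) → (Fin e → ℤ)}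
  {T : (Fin e → ℤ) → (Fin e → ℤ)}

lemma res_pow_succ_eq_iff_of_res_eq (hd : d ≠ 0) (hcop : ∀ ω, IsCoprime (m ω) (d : ℤ))
    (hT : ∀ x : Fin e → ℤ, (d : ℤ) • T x = m (res d x) • x + r (res d x))
    {x y : Fin e → ℤ} (hxy : res d x = res d y) (k : ℕ) :
    res (d ^ (k + 1)) x = res (d ^ (k + 1)) y ↔ res (d ^ k) (T x) = res (d ^ k) (T y) := by
  have hrel : ∀ i, (d : ℤ) * (T y i - T x i) = m (res d y) * (y i - x i) := fun i => by
    have hx := congrFun (hT x) i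
    have hy := congrFun (hT y) i
    simp only [Pi.smul_apply, smul_eq_mul, Pi.add_apply, hxy] at hx hy
    rw [mul_sub, mul_sub, hx, hy]
    ring
  rw [res_eq_res_iff_dvd, res_eq_res_iff_dvd]
  push_cast
  exact forall_congr' fun i =>
    pow_succ_dvd_iff_pow_dvd_of_mul_eq (Int.natCast_ne_zero.mpr hd) (hcop _) (hrel i) k

lemma res_pow_succ_eq_iff (hd : d ≠ 0) (hcop : ∀ ω, IsCoprime (m ω) (d : ℤ))
    (hT : ∀ x : Fin e → ℤ, (d : ℤ) • T x = m (res d x) • x + r (res d x))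
    (x y : Fin e → ℤ) (k : ℕ) :
    res (d ^ (k + 1)) x = res (d ^ (k + 1)) y ↔
      res d x = res d y ∧ res (d ^ k) (T x) = res (d ^ k) (T y) :=
  ⟨fun h => ⟨res_eq_of_res_pow_succ_eq h,
      (res_pow_succ_eq_iff_of_res_eq hd hcop hT (res_eq_of_res_pow_succ_eq h) k).1 h⟩,
    fun ⟨hxy, h⟩ => (res_pow_succ_eq_iff_of_res_eq hd hcop hT hxy k).2 h⟩

end CollatzStep

theorem congruence_iff_residues_general
    {e : ℕ} (d : ℕ) (hd : 1 < d)
    (m : (Fin e → ZMod d) → ℤ) (r : (Fin e → ZMod d) → (Fin e → ℤ))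
    (hcop : ∀ ω, IsCoprime (m ω) (d : ℤ))
    (T : (Fin e → ℤ) → (Fin e → ℤ))
    (hT : ∀ x : Fin e → ℤ, (d : ℤ) • T x = m (res d x) • x + r (res d x))
    (x y : Fin e → ℤ) (k : ℕ) :
    res (d ^ k) x = res (d ^ k) y ↔
      ∀ i : ℕ, i < k → res d (T^[i] x) = res d (T^[i] y) := by
  induction k generalizing x y with
  | zero => simpa using res_one_eq x y
  | succ k ih =>
    rw [res_pow_succ_eq_iff (by omega) hcop hT, ih, Nat.forall_lt_succ_left]
    simp only [Function.iterate_zero_apply, Function.iterate_succ_apply]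

/-- for a generalized Collatz mapping of relatively prime type,
`x ≡ y mod d^kΛ` holds if and only if `T^i(x) ≡ T^i(y) mod dΛ` for all
`i = 0, …, k-1`. -/
theorem congruence_iff_residues
    {e : ℕ} (d : ℕ) (hd : 1 < d)
    (m : (Fin e → ZMod d) → ℤ) (r : (Fin e → ZMod d) → (Fin e → ℤ))
    (hm : ∀ ω, 0 < m ω)
    (hcop : ∀ ω, IsCoprime (m ω) (d : ℤ))
    (T : (Fin e → ℤ) → (Fin e → ℤ))
    (hT : ∀ x : Fin e → ℤ, (d : ℤ) • T x = m (res d x) • x + r (res d x))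
    (x y : Fin e → ℤ) (k : ℕ) (hk : 1 ≤ k) :
    res (d ^ k) x = res (d ^ k) y ↔
      ∀ i : ℕ, i < k → res d (T^[i] x) = res d (T^[i] y) :=
  congruence_iff_residues_general d hd m r hcop T hT x y k
end

section
/- Let T be a generalized Collatz mapping on a lattice Λ ⊆ E equipped with a norm, and let x ∈ Λ with trajectory residues ω(x,i) satisfying ∏_{i=0}^{k-1} m_{ω(x,i)} < d^k. Set R = max_ω ‖r_ω‖, M = max_ω m_ω (assume M > d), λ_k = d^k − ∏_{i=0}^{k-1} m_{ω(x,i)}. Then every y ≡ x mod d^kΛ with ‖y‖ > R(M^k − d^k)/(λ_k(M−d)) satisfies ‖T^k(y)‖ < ‖y‖. -/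
open Finset

theorem pow_smul_eq_of_smul_succ_eq {R V : Type*} [CommSemiring R] [AddCommMonoid V]
    [Module R V] {d : R} {a : ℕ → R} {z b : ℕ → V}
    (h : ∀ n, d • z (n + 1) = a n • z n + b n) (n : ℕ) :
    d ^ n • z n = (∏ i ∈ range n, a i) • z 0 +
      ∑ t ∈ range n, ((∏ i ∈ Ico (t + 1) n, a i) * d ^ t) • b t := by
  induction n with
  | zero => simp
  | succ n ih =>
    have hcoef : ∀ t ∈ range n, a n • (((∏ i ∈ Ico (t + 1) n, a i) * d ^ t) • b t) =
        ((∏ i ∈ Ico (t + 1) (n + 1), a i) * d ^ t) • b t := by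
      intro t ht
      rw [prod_Ico_succ_top (by simpa using ht), smul_smul]
      ring_nf
    calc d ^ (n + 1) • z (n + 1) = a n • (d ^ n • z n) + d ^ n • b n := by
          rw [pow_succ, mul_smul, h, smul_add, smul_comm]
      _ = _ := by
          rw [ih, smul_add, smul_sum, sum_congr rfl hcoef, smul_smul, ← prod_range_succ_comm,
            sum_range_succ, Ico_self, prod_empty, one_mul, add_assoc]

section Seminorm

variable {V : Type*} [AddCommGroup V] [Module ℝ V] (p : Seminorm ℝ V)
  {d M R : ℝ} {a : ℕ → ℝ} {z b : ℕ → V}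

theorem pow_mul_seminorm_le_of_smul_succ_eq (h : ∀ n, d • z (n + 1) = a n • z n + b n)
    (hd : 0 ≤ d) (ha : ∀ n, 0 ≤ a n) (haM : ∀ n, a n ≤ M) (hb : ∀ n, p (b n) ≤ R) (n : ℕ) :
    d ^ n * p (z n) ≤
      (∏ i ∈ range n, a i) * p (z 0) + R * ∑ t ∈ range n, d ^ t * M ^ (n - 1 - t) := by
  have hM : 0 ≤ M := (ha 0).trans (haM 0)
  have hterm : ∀ t ∈ range n, p (((∏ i ∈ Ico (t + 1) n, a i) * d ^ t) • b t) ≤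
      R * (d ^ t * M ^ (n - 1 - t)) := by
    intro t _
    have hprod : ∏ i ∈ Ico (t + 1) n, a i ≤ M ^ (n - 1 - t) := by
      calc ∏ i ∈ Ico (t + 1) n, a i ≤ ∏ _i ∈ Ico (t + 1) n, M :=
            prod_le_prod (fun i _ => ha i) (fun i _ => haM i)
        _ = M ^ (n - 1 - t) := by rw [prod_const, Nat.card_Ico, Nat.sub_sub, add_comm 1]
    have hprod0 : 0 ≤ ∏ i ∈ Ico (t + 1) n, a i := prod_nonneg fun i _ => ha i
    rw [map_smul_eq_mul, Real.norm_of_nonneg (by positivity)]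
    calc (∏ i ∈ Ico (t + 1) n, a i) * d ^ t * p (b t) ≤ M ^ (n - 1 - t) * d ^ t * R := by
          gcongr
          exact hb t
      _ = R * (d ^ t * M ^ (n - 1 - t)) := by ring
  calc d ^ n * p (z n) = p (d ^ n • z n) := by
        rw [map_smul_eq_mul, Real.norm_of_nonneg (by positivity)]
    _ ≤ p ((∏ i ∈ range n, a i) • z 0) +
          ∑ t ∈ range n, p (((∏ i ∈ Ico (t + 1) n, a i) * d ^ t) • b t) := by
        rw [pow_smul_eq_of_smul_succ_eq h]
        grw [map_add_le_add, le_sum_of_subadditive p (map_zero p).le (map_add_le_add p)]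
    _ ≤ _ := by
        rw [map_smul_eq_mul, Real.norm_of_nonneg (prod_nonneg fun i _ => ha i), mul_sum]
        grw [sum_le_sum hterm]

theorem seminorm_lt_of_smul_succ_eq (h : ∀ n, d • z (n + 1) = a n • z n + b n)
    (hd : 0 ≤ d) (hdM : d < M) (ha : ∀ n, 0 ≤ a n) (haM : ∀ n, a n ≤ M)
    (hb : ∀ n, p (b n) ≤ R) {k : ℕ} (hprod : ∏ i ∈ range k, a i < d ^ k)
    (hz : R * (M ^ k - d ^ k) / ((d ^ k - ∏ i ∈ range k, a i) * (M - d)) < p (z 0)) :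
    p (z k) < p (z 0) := by
  set P := ∏ i ∈ range k, a i
  set S := ∑ t ∈ range k, d ^ t * M ^ (k - 1 - t)
  have hP : 0 ≤ P := prod_nonneg fun i _ => ha i
  have hgeom : S * (M - d) = M ^ k - d ^ k := by
    linear_combination -geom_sum₂_mul d M k
  rw [div_lt_iff₀ (by nlinarith)] at hz
  have hRS : R * S < (d ^ k - P) * p (z 0) := by
    refine lt_of_mul_lt_mul_right ?_ (sub_nonneg.2 hdM.le)
    linear_combination hz + R * hgeom
  have hle := pow_mul_seminorm_le_of_smul_succ_eq p h hd ha haM hb k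
  exact lt_of_mul_lt_mul_left (by linarith) (hP.trans hprod.le)

end Seminorm

section Residues

variable {e : ℕ}

theorem res_eq_res_iff_dvd_sub (n : ℕ) (a b : Fin e → ℤ) :
    res n a = res n b ↔ ∀ j, (n : ℤ) ∣ b j - a j := by
  simp only [funext_iff, res, ZMod.intCast_eq_intCast_iff_dvd_sub]

theorem res_eq_res_of_dvd {n n' : ℕ} (hn : n ∣ n') {a b : Fin e → ℤ}
    (h : res n' a = res n' b) : res n a = res n b := by
  rw [res_eq_res_iff_dvd_sub] at h ⊢
  exact fun j => (Int.natCast_dvd_natCast.2 hn).trans (h j)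

variable {d : ℕ} {m : (Fin e → ZMod d) → ℤ} {r : (Fin e → ZMod d) → (Fin e → ℤ)}
  {T : (Fin e → ℤ) → (Fin e → ℤ)}

theorem res_pow_apply_eq_of_res_pow_succ_eq (hd : d ≠ 0)
    (hT : ∀ x : Fin e → ℤ, (d : ℤ) • T x = m (res d x) • x + r (res d x))
    {n : ℕ} {a b : Fin e → ℤ} (h : res (d ^ (n + 1)) a = res (d ^ (n + 1)) b) :
    res (d ^ n) (T a) = res (d ^ n) (T b) := by
  have hω : res d a = res d b := res_eq_res_of_dvd (dvd_pow_self d n.succ_ne_zero) h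
  rw [res_eq_res_iff_dvd_sub] at h ⊢
  intro j
  have hdiff : (T b j - T a j) * d = m (res d a) * (b j - a j) := by
    have ha := congrFun (hT a) j
    have hb := congrFun (hT b) j
    simp only [Pi.smul_apply, Pi.add_apply, smul_eq_mul, ← hω] at ha hb
    linear_combination hb - ha
  rw [← mul_dvd_mul_iff_right (Int.natCast_ne_zero.2 hd), hdiff, ← Nat.cast_mul, ← pow_succ]
  exact (h j).mul_left _

theorem res_pow_iterate_eq_of_res_pow_add_eq (hd : d ≠ 0)
    (hT : ∀ x : Fin e → ℤ, (d : ℤ) • T x = m (res d x) • x + r (res d x)) (n i : ℕ)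
    {a b : Fin e → ℤ} (h : res (d ^ (n + i)) a = res (d ^ (n + i)) b) :
    res (d ^ n) (T^[i] a) = res (d ^ n) (T^[i] b) := by
  induction i generalizing a b with
  | zero => exact h
  | succ i ih =>
    exact ih (res_pow_apply_eq_of_res_pow_succ_eq hd hT (by rwa [← add_assoc] at h))

theorem res_iterate_eq_of_res_pow_eq (hd : d ≠ 0)
    (hT : ∀ x : Fin e → ℤ, (d : ℤ) • T x = m (res d x) • x + r (res d x))
    {k i : ℕ} (hi : i < k) {x y : Fin e → ℤ} (h : res (d ^ k) y = res (d ^ k) x) :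
    res d (T^[i] y) = res d (T^[i] x) := by
  have h' : res (d ^ (1 + i)) y = res (d ^ (1 + i)) x :=
    res_eq_res_of_dvd (pow_dvd_pow d (by omega)) h
  exact res_eq_res_of_dvd (dvd_pow_self d one_ne_zero)
    (res_pow_iterate_eq_of_res_pow_add_eq hd hT 1 i h')

theorem natCast_smul_toE_apply (hT : ∀ x : Fin e → ℤ, (d : ℤ) • T x = m (res d x) • x + r (res d x))
    (x : Fin e → ℤ) :
    (d : ℝ) • toE (T x) = (m (res d x) : ℝ) • toE x + toE (r (res d x)) := by
  funext j
  simpa [toE] using congr_arg (fun v : Fin e → ℤ => (v j : ℝ)) (hT x)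

end Residues

theorem stopping_time_estimate_general
    {e : ℕ} (d : ℕ) (hd : 1 < d)
    (m : (Fin e → ZMod d) → ℤ) (r : (Fin e → ZMod d) → (Fin e → ℤ))
    (hm : ∀ ω, 0 < m ω)
    (T : (Fin e → ℤ) → (Fin e → ℤ))
    (hT : ∀ x : Fin e → ℤ, (d : ℤ) • T x = m (res d x) • x + r (res d x))
    -- a norm on E = ℝ^e
    (f : (Fin e → ℝ) → ℝ)
    (hf_add : ∀ v w, f (v + w) ≤ f v + f w)
    (hf_smul : ∀ (c : ℝ) v, f (c • v) = |c| * f v)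
    (R : ℝ) (hR : ∀ ω, f (toE (r ω)) ≤ R)
    (M : ℤ) (hM : ∀ ω, m ω ≤ M) (hMd : (d : ℤ) < M)
    (x : Fin e → ℤ) (k : ℕ)
    (hprod : ∏ i ∈ Finset.range k, m (res d (T^[i] x)) < (d : ℤ) ^ k) :
    ∀ y : Fin e → ℤ, res (d ^ k) y = res (d ^ k) x →
      R * ((M : ℝ) ^ k - (d : ℝ) ^ k) /
          ((((d : ℤ) ^ k - ∏ i ∈ Finset.range k, m (res d (T^[i] x)) : ℤ) : ℝ) *
            ((M : ℝ) - (d : ℝ))) < f (toE y) →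
      f (toE (T^[k] y)) < f (toE y) := by
  intro y hy hlarge
  have hω : ∀ i ∈ range k, m (res d (T^[i] x)) = m (res d (T^[i] y)) := fun i hi =>
    congrArg m (res_iterate_eq_of_res_pow_eq (by omega) hT (mem_range.1 hi) hy).symm
  rw [prod_congr rfl hω] at hprod hlarge
  push_cast at hprod hlarge
  let p : Seminorm ℝ (Fin e → ℝ) :=
    Seminorm.of f hf_add (by simpa only [Real.norm_eq_abs] using hf_smul)
  exact seminorm_lt_of_smul_succ_eq p (z := fun n => toE (T^[n] y))
    (a := fun n => (m (res d (T^[n] y)) : ℝ)) (b := fun n => toE (r (res d (T^[n] y))))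
    (fun n => by simpa only [Function.iterate_succ_apply'] using natCast_smul_toE_apply hT _)
    (Nat.cast_nonneg d) (by exact_mod_cast hMd) (fun _ => by exact_mod_cast (hm _).le)
    (fun _ => by exact_mod_cast hM _) (fun _ => hR _) (by exact_mod_cast hprod) hlarge

/-- the stopping-time estimate. Suppose the trajectory residues of
`x` satisfy `∏_{i<k} m_{ω(x,i)} < d^k`, let `R` bound the norms of the shift
vectors, `M` bound the multipliers (with `M > d`), and
`λ_k = d^k - ∏_{i<k} m_{ω(x,i)}`. Then every `y ≡ x mod d^kΛ` with
`‖y‖ > R(M^k - d^k)/(λ_k (M - d))` satisfies `‖T^k(y)‖ < ‖y‖`. -/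
theorem stopping_time_estimate
    {e : ℕ} (d : ℕ) (hd : 1 < d)
    (m : (Fin e → ZMod d) → ℤ) (r : (Fin e → ZMod d) → (Fin e → ℤ))
    (hm : ∀ ω, 0 < m ω)
    (hcop : ∀ ω, IsCoprime (m ω) (d : ℤ))
    (T : (Fin e → ℤ) → (Fin e → ℤ))
    (hT : ∀ x : Fin e → ℤ, (d : ℤ) • T x = m (res d x) • x + r (res d x))
    -- a norm on E = ℝ^e
    (f : (Fin e → ℝ) → ℝ)
    (hf_add : ∀ v w, f (v + w) ≤ f v + f w)
    (hf_smul : ∀ (c : ℝ) v, f (c • v) = |c| * f v)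
    (hf_def : ∀ v, f v = 0 → v = 0)
    (R : ℝ) (hR : ∀ ω, f (toE (r ω)) ≤ R)
    (M : ℤ) (hM : ∀ ω, m ω ≤ M) (hMd : (d : ℤ) < M)
    (x : Fin e → ℤ) (k : ℕ)
    (hprod : ∏ i ∈ Finset.range k, m (res d (T^[i] x)) < (d : ℤ) ^ k) :
    ∀ y : Fin e → ℤ, res (d ^ k) y = res (d ^ k) x →
      R * ((M : ℝ) ^ k - (d : ℝ) ^ k) /
          ((((d : ℤ) ^ k - ∏ i ∈ Finset.range k, m (res d (T^[i] x)) : ℤ) : ℝ) *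
            ((M : ℝ) - (d : ℝ))) < f (toE y) →
      f (toE (T^[k] y)) < f (toE y) :=
  stopping_time_estimate_general d hd m r hm T hT f hf_add hf_smul R hR M hM hMd x k hprod
end

section
/- Let T : ℤ² → ℤ² be the generalized Collatz mapping of the example (d ≥ 2, b ≥ 1): T(x) = (m_{i,j} x + r_{i,j})/d for x ≡ (i,j) mod d. Then every point (x,y) ∈ ℤ² lying strictly between the lines y = bdx and x = 0 on either side — i.e., with x > 0 and y < bdx, or with x < 0 and y > bdx — has a divergent (not eventually periodic) T-trajectory. -/
/-!
In the sheared coordinates `u = x`, `v = y - bdx` each branch of `T` reads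
`z ↦ (m z + r) / d` with `m` coprime to `d` and `0 ≤ u(r), v(r) < m`. Hence `u` and `v` keep
their strict signs along an orbit, so a point with `u v < 0` stays in that open region. Iterating,
a `p`-periodic point would satisfy `(d ^ p - M) z = V` with `M` coprime to `d` and `V` in the
closed cone `u, v ≥ 0`; as `u(z)` and `v(z)` have opposite signs this forces `M = d ^ p`, which is
impossible since `d ^ p` and `d` are not coprime.
-/

/-- The multipliers of the example. -/
def mEx (d i j : ℕ) : ℤ :=
  if i = 0 ∧ j = 0 then 1
  else if max i j < d - 1 then (d : ℤ) - 1
  else (d : ℤ) + 1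

/-- The shift vectors of the example. -/
def rEx (d b i j : ℕ) : ℤ × ℤ :=
  if i = 0 ∧ j = 0 then (0, 0)
  else if max i j < d - 1 then ((i : ℤ), (j : ℤ) + (b : ℤ) * d * i)
  else if i = d - 1 then (1, ((b : ℤ) + 1) * d - j)
  else ((d : ℤ) - i, (b : ℤ) * d * ((d : ℤ) - i) + 1)

section ConeStep

variable {G : Type*} [AddCommGroup G]

/-- `f` and `g` are the separating forms: the shifts `r` lie in the cone `B⁺ = {f ≥ 0, g ≥ 0}`. -/
def IsConeStep (d : ℤ) (f g : G →+ ℤ) (T : G → G) : Prop :=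
  ∀ z, ∃ (m : ℤ) (r : G), d • T z = m • z + r ∧ 1 ≤ m ∧ IsCoprime m d ∧
    0 ≤ f r ∧ f r < m ∧ 0 ≤ g r ∧ g r < m

lemma pos_of_mul_eq_mul_add {d m a a' r : ℤ} (hd : 0 < d) (hm : 0 < m) (hr : 0 ≤ r)
    (h : d * a' = m * a + r) (ha : 0 < a) : 0 < a' :=
  pos_of_mul_pos_right (by nlinarith) hd.le

lemma neg_of_mul_eq_mul_add {d m a a' r : ℤ} (hd : 0 < d) (hm : 0 ≤ m) (hrm : r < m)
    (h : d * a' = m * a + r) (ha : a < 0) : a' < 0 :=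
  neg_of_mul_neg_right (by nlinarith) hd.le

lemma eq_zero_of_mul_nonneg_of_mul_neg {c a b : ℤ} (ha : 0 ≤ c * a) (hb : 0 ≤ c * b)
    (hab : a * b < 0) : c = 0 := by
  have : c ^ 2 * (a * b) ≥ 0 := by nlinarith [mul_nonneg ha hb]
  nlinarith [sq_nonneg c]

namespace IsConeStep

variable {d : ℤ} {f g : G →+ ℤ} {T : G → G}

lemma mul_neg_apply (hT : IsConeStep d f g T) (hd : 0 < d) {z : G} (hz : f z * g z < 0) :
    f (T z) * g (T z) < 0 := by
  obtain ⟨m, r, hstep, hm, -, hf0, hfm, hg0, hgm⟩ := hT z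
  have hf : d * f (T z) = m * f z + f r := by
    simpa only [map_zsmul, map_add, smul_eq_mul] using congrArg f hstep
  have hg : d * g (T z) = m * g z + g r := by
    simpa only [map_zsmul, map_add, smul_eq_mul] using congrArg g hstep
  rcases mul_neg_iff.mp hz with ⟨hfz, hgz⟩ | ⟨hfz, hgz⟩
  · exact mul_neg_of_pos_of_neg (pos_of_mul_eq_mul_add hd (by omega) hf0 hf hfz)
      (neg_of_mul_eq_mul_add hd (by omega) hgm hg hgz)
  · exact mul_neg_of_neg_of_pos (neg_of_mul_eq_mul_add hd (by omega) hfm hf hfz)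
      (pos_of_mul_eq_mul_add hd (by omega) hg0 hg hgz)

lemma mul_neg_iterate (hT : IsConeStep d f g T) (hd : 0 < d) (n : ℕ) {z : G}
    (hz : f z * g z < 0) : f (T^[n] z) * g (T^[n] z) < 0 := by
  induction n with
  | zero => exact hz
  | succ n ih => exact Function.iterate_succ_apply' T n z ▸ hT.mul_neg_apply hd ih

lemma exists_iterate (hT : IsConeStep d f g T) (hd : 0 ≤ d) (n : ℕ) (z : G) :
    ∃ (M : ℤ) (V : G), d ^ n • T^[n] z = M • z + V ∧ IsCoprime M d ∧ 0 ≤ f V ∧ 0 ≤ g V := by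
  induction n with
  | zero => exact ⟨1, 0, by simp, isCoprime_one_left, by simp, by simp⟩
  | succ n ih =>
    obtain ⟨M, V, hMV, hM, hfV, hgV⟩ := ih
    obtain ⟨m, r, hstep, hm, hmd, hfr, -, hgr, -⟩ := hT (T^[n] z)
    refine ⟨m * M, m • V + d ^ n • r, ?_, hmd.mul_left hM, ?_, ?_⟩
    · rw [Function.iterate_succ_apply', pow_succ', mul_comm, mul_smul, hstep, smul_add,
        smul_comm _ m, hMV]
      module
    · simp only [map_add, map_zsmul, smul_eq_mul]
      positivity
    · simp only [map_add, map_zsmul, smul_eq_mul]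
      positivity

lemma not_isPeriodicPt (hT : IsConeStep d f g T) (hd : 1 < d) {z : G} (hz : f z * g z < 0)
    {p : ℕ} (hp : 0 < p) : ¬ Function.IsPeriodicPt T p z := by
  intro hper
  obtain ⟨M, V, hMV, hM, hfV, hgV⟩ := hT.exists_iterate (by omega) p z
  rw [hper.eq] at hMV
  have hV : (d ^ p - M) • z = V := by rw [sub_smul, hMV]; abel
  have hf : f V = (d ^ p - M) * f z := by rw [← hV, map_zsmul, smul_eq_mul]
  have hg : g V = (d ^ p - M) * g z := by rw [← hV, map_zsmul, smul_eq_mul]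
  have hMd : M = d ^ p :=
    (sub_eq_zero.mp (eq_zero_of_mul_nonneg_of_mul_neg (hf ▸ hfV) (hg ▸ hgV) hz)).symm
  rw [hMd, IsCoprime.pow_left_iff hp, isCoprime_self, Int.isUnit_iff] at hM
  omega

end IsConeStep

end ConeStep

lemma one_le_mEx {d : ℕ} (hd : 2 ≤ d) (i j : ℕ) : 1 ≤ mEx d i j := by
  unfold mEx
  split_ifs <;> omega

lemma isCoprime_mEx (d i j : ℕ) : IsCoprime (mEx d i j) d := by
  unfold mEx
  split_ifs
  · exact isCoprime_one_left
  · exact ⟨-1, 1, by ring⟩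
  · exact ⟨1, -1, by ring⟩

lemma rEx_fst_mem_Ico {d : ℕ} (b : ℕ) {i j : ℕ} (hi : i < d) :
    0 ≤ (rEx d b i j).1 ∧ (rEx d b i j).1 < mEx d i j := by
  unfold rEx mEx
  split_ifs <;> omega

lemma rEx_shear_mem_Ico {d : ℕ} (b : ℕ) {i j : ℕ} (hj : j < d) :
    0 ≤ (rEx d b i j).2 - b * d * (rEx d b i j).1 ∧
      (rEx d b i j).2 - b * d * (rEx d b i j).1 < mEx d i j := by
  unfold rEx mEx
  split_ifs <;> constructor <;> ring_nf <;> omega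

lemma Int.exists_lt_modEq_natCast (x : ℤ) {d : ℕ} (hd : 0 < d) :
    ∃ i < d, x ≡ (i : ℤ) [ZMOD d] := by
  have h0 := Int.emod_nonneg x (Int.natCast_ne_zero.mpr hd.ne')
  have hlt := Int.emod_lt_of_pos x (Int.natCast_pos.mpr hd)
  refine ⟨(x % d).toNat, by omega, ?_⟩
  rw [Int.toNat_of_nonneg h0]
  exact (Int.mod_modEq x d).symm

lemma isConeStep_of_example {d : ℕ} (b : ℕ) (hd : 2 ≤ d) {T : ℤ × ℤ → ℤ × ℤ}
    (hT : ∀ (x y : ℤ) (i j : ℕ), i < d → j < d →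
      x ≡ (i : ℤ) [ZMOD (d : ℤ)] → y ≡ (j : ℤ) [ZMOD (d : ℤ)] →
      (d : ℤ) • T (x, y) = mEx d i j • (x, y) + rEx d b i j) :
    IsConeStep d (AddMonoidHom.fst ℤ ℤ)
      (AddMonoidHom.snd ℤ ℤ - ((b : ℤ) * d) • AddMonoidHom.fst ℤ ℤ) T := by
  rintro ⟨x, y⟩
  obtain ⟨i, hi, hx⟩ := Int.exists_lt_modEq_natCast x (d := d) (by omega)
  obtain ⟨j, hj, hy⟩ := Int.exists_lt_modEq_natCast y (d := d) (by omega)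
  obtain ⟨hf0, hfm⟩ := rEx_fst_mem_Ico b (j := j) hi
  obtain ⟨hg0, hgm⟩ := rEx_shear_mem_Ico b (i := i) hj
  exact ⟨mEx d i j, rEx d b i j, hT x y i j hi hj hx hy, one_le_mEx hd i j,
    isCoprime_mEx d i j, hf0, hfm, by simpa using hg0, by simpa using hgm⟩

theorem example_divergent_general (d b : ℕ) (hd : 2 ≤ d)
    (T : ℤ × ℤ → ℤ × ℤ)
    (hT : ∀ (x y : ℤ) (i j : ℕ), i < d → j < d →
      x ≡ (i : ℤ) [ZMOD (d : ℤ)] → y ≡ (j : ℤ) [ZMOD (d : ℤ)] →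
      (d : ℤ) • T (x, y) = mEx d i j • (x, y) + rEx d b i j) :
    ∀ x y : ℤ,
      ((0 < x ∧ y < (b : ℤ) * d * x) ∨ (x < 0 ∧ (b : ℤ) * d * x < y)) →
      ¬ ∃ N p : ℕ, 0 < p ∧ T^[N + p] (x, y) = T^[N] (x, y) := by
  rintro x y hxy ⟨N, p, hp, hcycle⟩
  have hstep := isConeStep_of_example b hd hT
  have hdirected : x * (y - b * d * x) < 0 := by
    rcases hxy with ⟨hx, hy⟩ | ⟨hx, hy⟩
    · exact mul_neg_of_pos_of_neg hx (by linarith)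
    · exact mul_neg_of_neg_of_pos hx (by linarith)
  have horbit := hstep.mul_neg_iterate (by omega) N (z := (x, y)) (by simpa using hdirected)
  refine hstep.not_isPeriodicPt (by omega) horbit hp ?_
  rw [Function.IsPeriodicPt, Function.IsFixedPt, ← Function.iterate_add_apply, add_comm, hcycle]

/-- for the generalized Collatz mapping `T` of the example
(`d ≥ 2`, `b ≥ 1`, `T(x) = (m_{i,j} x + r_{i,j})/d` for `x ≡ (i,j) mod d`),
every point `(x,y)` with `x > 0, y < bdx` or with `x < 0, y > bdx` has a
divergent (not eventually periodic) `T`-trajectory. -/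
theorem example_divergent (d b : ℕ) (hd : 2 ≤ d) (hb : 1 ≤ b)
    (T : ℤ × ℤ → ℤ × ℤ)
    (hT : ∀ (x y : ℤ) (i j : ℕ), i < d → j < d →
      x ≡ (i : ℤ) [ZMOD (d : ℤ)] → y ≡ (j : ℤ) [ZMOD (d : ℤ)] →
      (d : ℤ) • T (x, y) = mEx d i j • (x, y) + rEx d b i j) :
    ∀ x y : ℤ,
      ((0 < x ∧ y < (b : ℤ) * d * x) ∨ (x < 0 ∧ (b : ℤ) * d * x < y)) →
      ¬ ∃ N p : ℕ, 0 < p ∧ T^[N + p] (x, y) = T^[N] (x, y) :=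
  example_divergent_general d b hd T hT
end
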